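/- Let k ≥ 1 and let d_1, …, d_k be natural numbers with each d_i ≥ 1. Set G := ∏_{i=1}^{k} F_{d_i} in ℤ[X,Y], where F_d := ∏_{i=0}^{d} (1 + (d−i)·X + i·Y). Then for every natural number j with 0 ≤ j ≤ ∑_{i=1}^{k} (d_i + 1), the homogeneous component of degree j of G (with X and Y each of degree 1) is a nonzero polynomial, and it equals P_j(e₁, e₂) for some two-variable polynomial P_j ∈ ℤ[S,T] all of whose coefficients are nonnegative, where e₁ = X+Y and e₂ = X·Y. In Chern-class terms: every Chern class c_j of the direct sum ⨁_{i=1}^k Sym^{d_i} of symmetric powers of a rank-2 bundle, for j up to the rank ∑(d_i+1), is a nonzero polynomial in c₁, c₂ with nonnegative integer coefficients. -/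

import Mathlib

open MvPolynomial Finset

/-- `Xp` is the first Chern root. -/
noncomputable def Xp : MvPolynomial (Fin 2) ℤ := MvPolynomial.X 0
/-- `Yp` is the second Chern root. -/
noncomputable def Yp : MvPolynomial (Fin 2) ℤ := MvPolynomial.X 1

/-- `F d` is the total Chern class of `Sym^d` of a rank-2 bundle with Chern
roots `X`, `Y`. -/
noncomputable def F (d : ℕ) : MvPolynomial (Fin 2) ℤ :=
  ∏ i ∈ Finset.range (d + 1), (1 + C ((d : ℤ) - (i : ℤ)) * Xp + C (i : ℤ) * Yp)

/-- `e₁ = X + Y` plays the role of `c₁`. -/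
noncomputable def e1 : MvPolynomial (Fin 2) ℤ := Xp + Yp
/-- `e₂ = X·Y` plays the role of `c₂`. -/
noncomputable def e2 : MvPolynomial (Fin 2) ℤ := Xp * Yp

/-!
Pairing the factors `i` and `d - i` of `F d` gives
`(1 + uX + vY)(1 + vX + uY) = 1 + (u + v) e₁ + uv e₁² + (u - v)² e₂`, and a middle factor is
`1 + u e₁`, so `∏ F (d i) = Q(e₁, e₂)` with `Q` having nonnegative coefficients. As `e₁`, `e₂`
are homogeneous of degrees 1 and 2, the degree-`j` component of `Q(e₁, e₂)` is `P(e₁, e₂)`,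
where `P` is the part of `Q` of weighted degree `j` for the weights `(1, 2)`.
It is nonzero because `X = Y = t` turns `∏ F (d i)` into `∏ (1 + d_i t) ^ (d_i + 1)`, whose
coefficients are positive up to its degree `∑ (d_i + 1)`.
-/

namespace Polynomial

variable {R : Type*} [CommSemiring R] [PartialOrder R] [IsStrictOrderedRing R]

def PosCoeffsUpTo (p : R[X]) (n : ℕ) : Prop :=
  (∀ i, 0 ≤ p.coeff i) ∧ ∀ i ≤ n, 0 < p.coeff i

theorem posCoeffsUpTo_one : PosCoeffsUpTo (1 : R[X]) 0 :=
  ⟨fun i => by rw [coeff_one]; split <;> simp, fun i hi => by simp [Nat.le_zero.mp hi]⟩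

theorem posCoeffsUpTo_one_add_C_mul_X {a : R} (ha : 0 < a) :
    PosCoeffsUpTo (1 + C a * X) 1 := by
  refine ⟨fun i => ?_, fun i hi => ?_⟩
  · rcases i with _ | _ | i <;> simp [coeff_one, ha.le]
  · interval_cases i <;> simp [coeff_one, ha]

theorem PosCoeffsUpTo.mul {p q : R[X]} {m n : ℕ} (hp : PosCoeffsUpTo p m)
    (hq : PosCoeffsUpTo q n) : PosCoeffsUpTo (p * q) (m + n) := by
  refine ⟨fun i => ?_, fun i hi => ?_⟩
  · rw [coeff_mul]
    exact sum_nonneg fun x _ => mul_nonneg (hp.1 _) (hq.1 _)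
  · rw [coeff_mul]
    refine sum_pos' (fun x _ => mul_nonneg (hp.1 _) (hq.1 _))
      ⟨(min i m, i - min i m), by simp, mul_pos (hp.2 _ (min_le_right _ _)) (hq.2 _ ?_)⟩
    omega

theorem PosCoeffsUpTo.pow {p : R[X]} {n : ℕ} (hp : PosCoeffsUpTo p n) (k : ℕ) :
    PosCoeffsUpTo (p ^ k) (n * k) := by
  induction k with
  | zero => exact posCoeffsUpTo_one
  | succ k ih => rw [pow_succ, mul_add_one]; exact ih.mul hp

theorem posCoeffsUpTo_prod {ι : Type*} (s : Finset ι) (p : ι → R[X]) (n : ι → ℕ)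
    (h : ∀ i ∈ s, PosCoeffsUpTo (p i) (n i)) :
    PosCoeffsUpTo (∏ i ∈ s, p i) (∑ i ∈ s, n i) := by
  classical
  induction s using Finset.induction_on with
  | empty => exact posCoeffsUpTo_one
  | insert a s ha ih =>
    rw [prod_insert ha, sum_insert ha]
    exact (h a (mem_insert_self a s)).mul (ih fun i hi => h i (mem_insert_of_mem hi))

end Polynomial

namespace MvPolynomial

variable {σ τ R : Type*} [CommSemiring R]

theorem isHomogeneous_aeval_monomial (w : σ → ℕ) {g : σ → MvPolynomial τ R}
    (hg : ∀ i, (g i).IsHomogeneous (w i)) (m : σ →₀ ℕ) (r : R) :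
    (aeval g (monomial m r)).IsHomogeneous (Finsupp.weight w m) := by
  rw [aeval_monomial, Finsupp.weight_apply, Finsupp.sum, ← zero_add (∑ _ ∈ _, _)]
  exact (isHomogeneous_C _ r).mul
    (IsHomogeneous.prod _ _ _ fun i _ => by simpa [mul_comm] using (hg i).pow (m i))

theorem homogeneousComponent_aeval (w : σ → ℕ) {g : σ → MvPolynomial τ R}
    (hg : ∀ i, (g i).IsHomogeneous (w i)) (n : ℕ) (p : MvPolynomial σ R) :
    homogeneousComponent n (aeval g p) = aeval g (weightedHomogeneousComponent w n p) := by
  induction p using induction_on' with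
  | monomial m r =>
    rw [homogeneousComponent_of_mem (isHomogeneous_aeval_monomial w hg m r),
      weightedHomogeneousComponent_of_mem (isWeightedHomogeneous_monomial w m r rfl)]
    split_ifs <;> simp
  | add p q hp hq => simp only [map_add, hp, hq]

theorem aeval_X_monomial (m : σ →₀ ℕ) (r : R) :
    aeval (fun _ => Polynomial.X) (monomial m r) = Polynomial.C r * Polynomial.X ^ m.degree := by
  rw [aeval_monomial, Finsupp.prod, prod_pow_eq_pow_sum, Polynomial.algebraMap_eq]
  rfl

theorem coeff_aeval_X_homogeneousComponent (n : ℕ) (p : MvPolynomial σ R) :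
    (aeval (fun _ : σ => (Polynomial.X : Polynomial R)) (homogeneousComponent n p)).coeff n =
      (aeval (fun _ : σ => (Polynomial.X : Polynomial R)) p).coeff n := by
  induction p using induction_on' with
  | monomial m r =>
    rw [homogeneousComponent_of_mem (isHomogeneous_monomial r rfl)]
    split_ifs with h
    · rfl
    · rw [map_zero, Polynomial.coeff_zero, aeval_X_monomial, Polynomial.coeff_C_mul_X_pow,
        if_neg h]
  | add p q hp hq => simp only [map_add, Polynomial.coeff_add, hp, hq]

section NonnegCoeffs

variable [PartialOrder R] [IsOrderedRing R]

variable (σ R) in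
def nonnegCoeffs : Subsemiring (MvPolynomial σ R) where
  carrier := {p | ∀ m, 0 ≤ p.coeff m}
  zero_mem' m := by simp
  one_mem' m := by classical rw [coeff_one]; split <;> simp
  add_mem' hp hq m := by rw [coeff_add]; exact add_nonneg (hp m) (hq m)
  mul_mem' hp hq m := by
    classical rw [coeff_mul]; exact sum_nonneg fun x _ => mul_nonneg (hp _) (hq _)

theorem X_mem_nonnegCoeffs (i : σ) : X i ∈ nonnegCoeffs σ R := by
  classical
  intro m
  rw [coeff_X]
  split <;> simp

theorem weightedHomogeneousComponent_mem_nonnegCoeffs (w : σ → ℕ) (n : ℕ)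
    {p : MvPolynomial σ R} (hp : p ∈ nonnegCoeffs σ R) :
    weightedHomogeneousComponent w n p ∈ nonnegCoeffs σ R := by
  classical
  intro m
  rw [coeff_weightedHomogeneousComponent]
  split
  · exact hp m
  · exact le_rfl

end NonnegCoeffs

end MvPolynomial

noncomputable def rootFactor (u v : ℤ) : MvPolynomial (Fin 2) ℤ := 1 + C u * Xp + C v * Yp

/-- `innerF a n` is `F (2 * a + n)` without its first `a` and last `a` factors. -/
noncomputable def innerF (a n : ℕ) : MvPolynomial (Fin 2) ℤ :=
  ∏ i ∈ range (n + 1), rootFactor (a + n - i) (a + i)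

theorem F_eq_innerF (d : ℕ) : F d = innerF 0 d := by
  simp [F, innerF, rootFactor]

theorem innerF_add_two (a n : ℕ) :
    innerF a (n + 2) =
      rootFactor (a + (n + 2 : ℕ)) a * innerF (a + 1) n * rootFactor a (a + (n + 2 : ℕ)) := by
  rw [innerF, prod_range_succ, prod_range_succ', innerF, mul_comm (∏ i ∈ _, _)]
  congr 2
  · exact prod_congr rfl fun i _ => by push_cast; ring_nf
  · push_cast; ring

theorem rootFactor_self (a : ℕ) : rootFactor a a = 1 + (a : MvPolynomial (Fin 2) ℤ) * e1 := by
  simp only [rootFactor, e1, map_natCast]; ring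

theorem rootFactor_mul_rootFactor (v m : ℕ) :
    rootFactor (v + m) v * rootFactor v (v + m) =
      1 + ((2 * v + m : ℕ) : MvPolynomial (Fin 2) ℤ) * e1 + (v * (v + m) : ℕ) * e1 ^ 2 +
        (m ^ 2 : ℕ) * e2 := by
  simp only [rootFactor, e1, e2, ← Nat.cast_add, map_natCast]; push_cast; ring

noncomputable def nonnegInE : Subsemiring (MvPolynomial (Fin 2) ℤ) :=
  (nonnegCoeffs (Fin 2) ℤ).map (aeval ![e1, e2]).toRingHom

theorem e1_mem_nonnegInE : e1 ∈ nonnegInE := ⟨X 0, X_mem_nonnegCoeffs 0, by simp⟩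
theorem e2_mem_nonnegInE : e2 ∈ nonnegInE := ⟨X 1, X_mem_nonnegCoeffs 1, by simp⟩

theorem rootFactor_self_mem_nonnegInE (a : ℕ) : rootFactor a a ∈ nonnegInE := by
  rw [rootFactor_self]
  exact add_mem (one_mem _) (mul_mem (natCast_mem _ a) e1_mem_nonnegInE)

theorem rootFactor_mul_rootFactor_mem_nonnegInE (v m : ℕ) :
    rootFactor (v + m) v * rootFactor v (v + m) ∈ nonnegInE := by
  rw [rootFactor_mul_rootFactor]
  refine add_mem (add_mem (add_mem (one_mem _) ?_) ?_) ?_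
  · exact mul_mem (natCast_mem _ _) e1_mem_nonnegInE
  · exact mul_mem (natCast_mem _ _) (pow_mem e1_mem_nonnegInE 2)
  · exact mul_mem (natCast_mem _ _) e2_mem_nonnegInE

theorem innerF_mem_nonnegInE (n a : ℕ) : innerF a n ∈ nonnegInE := by
  induction n using Nat.twoStepInduction generalizing a with
  | zero => simpa [innerF] using rootFactor_self_mem_nonnegInE a
  | one => simpa [innerF, prod_range_succ] using rootFactor_mul_rootFactor_mem_nonnegInE a 1
  | more n ih _ =>
    rw [innerF_add_two, mul_right_comm]
    exact mul_mem (rootFactor_mul_rootFactor_mem_nonnegInE a (n + 2)) (ih (a + 1))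

theorem F_mem_nonnegInE (d : ℕ) : F d ∈ nonnegInE := F_eq_innerF d ▸ innerF_mem_nonnegInE d 0

theorem e1_isHomogeneous : e1.IsHomogeneous 1 := (isHomogeneous_X ℤ 0).add (isHomogeneous_X ℤ 1)

theorem e2_isHomogeneous : e2.IsHomogeneous 2 := (isHomogeneous_X ℤ 0).mul (isHomogeneous_X ℤ 1)

theorem aeval_X_F (d : ℕ) :
    aeval (fun _ => Polynomial.X) (F d) = (1 + Polynomial.C (d : ℤ) * Polynomial.X) ^ (d + 1) := by
  rw [F, map_prod, prod_congr rfl fun i _ => ?_, prod_const, card_range]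
  simp only [Xp, Yp, map_add, map_mul, map_one, aeval_X, map_sub, map_natCast]
  ring

theorem stmt6_general (k : ℕ) (d : Fin k → ℕ) (hd : ∀ i, 1 ≤ d i)
    (j : ℕ) (hj : j ≤ ∑ i, (d i + 1)) :
    MvPolynomial.homogeneousComponent j (∏ i, F (d i)) ≠ 0 ∧
    ∃ P : MvPolynomial (Fin 2) ℤ,
      (∀ m, 0 ≤ P.coeff m) ∧
      MvPolynomial.homogeneousComponent j (∏ i, F (d i)) =
        MvPolynomial.aeval ![e1, e2] P := by
  constructor
  · intro h
    have hpos : 0 < (aeval (fun _ => (Polynomial.X : Polynomial ℤ)) (∏ i, F (d i))).coeff j := by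
      simp only [map_prod, aeval_X_F]
      refine (Polynomial.posCoeffsUpTo_prod _ _ _ fun i _ =>
        (Polynomial.posCoeffsUpTo_one_add_C_mul_X ?_).pow (d i + 1)).2 j (by simpa using hj)
      exact_mod_cast hd i
    rw [← coeff_aeval_X_homogeneousComponent, h, map_zero, Polynomial.coeff_zero] at hpos
    exact hpos.false
  · obtain ⟨Q, hQ, hGQ⟩ : ∏ i, F (d i) ∈ nonnegInE := prod_mem fun i _ => F_mem_nonnegInE (d i)
    refine ⟨weightedHomogeneousComponent ![1, 2] j Q,
      weightedHomogeneousComponent_mem_nonnegCoeffs _ j hQ, ?_⟩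
    rw [← hGQ]
    exact homogeneousComponent_aeval ![1, 2]
      (Fin.forall_fin_two.2 ⟨e1_isHomogeneous, e2_isHomogeneous⟩) j Q

/-- Every Chern class `c_j` of the direct sum `⨁_{i=1}^k Sym^{d_i}` of symmetric
powers of a rank-2 bundle, for `j` up to the rank `∑ (d_i + 1)`, is a nonzero
polynomial in `c₁, c₂` with nonnegative integer coefficients. -/
theorem stmt6 (k : ℕ) (hk : 1 ≤ k) (d : Fin k → ℕ) (hd : ∀ i, 1 ≤ d i)
    (j : ℕ) (hj : j ≤ ∑ i, (d i + 1)) :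
    MvPolynomial.homogeneousComponent j (∏ i, F (d i)) ≠ 0 ∧
    ∃ P : MvPolynomial (Fin 2) ℤ,
      (∀ m, 0 ≤ P.coeff m) ∧
      MvPolynomial.homogeneousComponent j (∏ i, F (d i)) =
        MvPolynomial.aeval ![e1, e2] P :=
  stmt6_general k d hd j hj
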